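/- arXiv:1305.0460 — 3 statements merged into one kernel-verified Lean document; each statement's English description precedes it below -/
import Mathlib

section
/- Let (y_i)_{i=0}^n and (x_i)_{i=0}^n be real sequences, each satisfying a recursion y_r = y_{r-1} + y_{θ(r)} and x_r = x_{r-1} + x_{θ'(r)} for r ≥ 2, with θ(r), θ'(r) < r. Suppose there is ℓ ≥ 2 such that: (1) θ(i) ≥ ℓ-1 implies θ'(i) = θ(i); (2) x_{ℓ-1} ≥ y_{ℓ-1} and x_ℓ ≥ y_ℓ; (3) x_{θ'(i)} ≥ y_{θ(i)} for all i > ℓ with θ(i) < ℓ-1; and suppose both sequences are monotone nondecreasing and nonnegative. Then x_i ≥ y_i for all i ≥ ℓ-1. -/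
/-- Lemma on improvement: if (y_i), (x_i) are nonnegative nondecreasing sequences
following recursions y_r = y_{r-1} + y_{θ(r)}, x_r = x_{r-1} + x_{θ'(r)} with
θ(r), θ'(r) < r, and ℓ ≥ 2 is such that (1) θ(i) ≥ ℓ-1 implies θ'(i) = θ(i),
(2) x_{ℓ-1} ≥ y_{ℓ-1} and x_ℓ ≥ y_ℓ, and (3) x_{θ'(i)} ≥ y_{θ(i)} whenever i > ℓ
and θ(i) < ℓ-1, then x_i ≥ y_i for all ℓ-1 ≤ i ≤ n. -/
theorem stmt_15 (n : ℕ) (θ θ' : ℕ → ℕ)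
    (hθ : ∀ r, 2 ≤ r → r ≤ n → θ r < r) (hθ' : ∀ r, 2 ≤ r → r ≤ n → θ' r < r)
    (y x : ℕ → ℝ)
    (hyrec : ∀ r, 2 ≤ r → r ≤ n → y r = y (r - 1) + y (θ r))
    (hxrec : ∀ r, 2 ≤ r → r ≤ n → x r = x (r - 1) + x (θ' r))
    (hynn : ∀ i ≤ n, 0 ≤ y i) (hxnn : ∀ i ≤ n, 0 ≤ x i)
    (hymono : ∀ i, i + 1 ≤ n → y i ≤ y (i + 1))
    (hxmono : ∀ i, i + 1 ≤ n → x i ≤ x (i + 1))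
    (ℓ : ℕ) (hℓ : 2 ≤ ℓ) (hℓn : ℓ ≤ n)
    (h1 : ∀ i, 2 ≤ i → i ≤ n → ℓ - 1 ≤ θ i → θ' i = θ i)
    (h2 : y (ℓ - 1) ≤ x (ℓ - 1)) (h2' : y ℓ ≤ x ℓ)
    (h3 : ∀ i, ℓ < i → i ≤ n → θ i < ℓ - 1 → y (θ i) ≤ x (θ' i)) :
    ∀ i, ℓ - 1 ≤ i → i ≤ n → y i ≤ x i := by
  intro i
  induction i using Nat.strong_induction_on with
  | _ i ih =>
    intro hi hin
    rcases lt_trichotomy i ℓ with h | h | h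
    · have : i = ℓ - 1 := le_antisymm (by omega) hi
      rw [this]; exact h2
    · rw [h]; exact h2'
    · have h2i : 2 ≤ i := by omega
      rw [hyrec i h2i hin, hxrec i h2i hin]
      have hprev : y (i - 1) ≤ x (i - 1) := ih (i - 1) (by omega) (by omega) (by omega)
      have hθi : θ i < i := hθ i h2i hin
      have hrest : y (θ i) ≤ x (θ' i) := by
        rcases lt_or_ge (θ i) (ℓ - 1) with hc | hc
        · exact h3 i h hin hc
        · rw [h1 i h2i hin hc]
          exact ih (θ i) hθi hc (by omega)
      linarith
end

section
/- Let (b_i)_{i=0}^n satisfy b_0 = 1, b_1 = 0, and b_i = b_{i-1} + b_{θ(i)} for i ≥ 2 where θ(i) < i, and suppose b_{θ(i)} = 0 whenever θ(i) ≠ i-2 and i ≥ k+2 for some fixed k ≥ 3, with b_i = 0 for all i < k and b_k ≤ 1, b_{k+1} ≤ 2. Let (a_i) satisfy a_0 = 1, a_1 = 0, a_i = a_{i-1} + a_{i-2}. Then b_i ≤ a_i for all k ≤ i ≤ n. -/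
/-! Shifted by one, `a` is the Fibonacci sequence, so it is nonnegative and monotone from
index `1` on; hence `b k ≤ 1 = fib 2 ≤ a k` and `b (k + 1) ≤ 2 = fib 3 ≤ a (k + 1)`. Beyond `k + 1`
each step of `b` either follows the Fibonacci recurrence (`θ i = i - 2`) or adds nothing, so
`b ≤ a` propagates by two-step induction. -/

theorem eq_fib_sub_one_of_rec {R : Type*} [AddMonoidWithOne R] (a : ℕ → R)
    (ha0 : a 0 = 1) (ha1 : a 1 = 0) (harec : ∀ i, 2 ≤ i → a i = a (i - 1) + a (i - 2)) :
    ∀ i, 1 ≤ i → a i = Nat.fib (i - 1) := by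
  suffices h : ∀ i, a (i + 1) = Nat.fib i by
    intro i hi
    obtain ⟨i, rfl⟩ := Nat.exists_eq_add_of_le' hi
    exact h i
  intro i
  induction i using Nat.twoStepInduction with
  | zero => simp [ha1]
  | one => simp [harec 2 le_rfl, ha0, ha1]
  | more i ih₀ ih₁ =>
    rw [harec _ (by omega), show i + 2 + 1 - 1 = i + 1 + 1 by omega,
      show i + 2 + 1 - 2 = i + 1 by omega, ih₀, ih₁, Nat.fib_add_two, add_comm (Nat.fib i), Nat.cast_add]

theorem stmt_16_general (n k : ℕ) (hk : 3 ≤ k) (θ : ℕ → ℕ)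
    (b : ℕ → ℝ)
    (hbrec : ∀ i, 2 ≤ i → i ≤ n → b i = b (i - 1) + b (θ i))
    (hzero : ∀ i, k + 2 ≤ i → i ≤ n → θ i ≠ i - 2 → b (θ i) = 0)
    (hbk : b k ≤ 1) (hbk1 : b (k + 1) ≤ 2)
    (a : ℕ → ℝ) (ha0 : a 0 = 1) (ha1 : a 1 = 0)
    (harec : ∀ i, 2 ≤ i → a i = a (i - 1) + a (i - 2)) :
    ∀ i, k ≤ i → i ≤ n → b i ≤ a i := by
  have hfib := eq_fib_sub_one_of_rec a ha0 ha1 harec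
  intro i hki
  obtain ⟨j, rfl⟩ := Nat.exists_eq_add_of_le hki
  induction j using Nat.twoStepInduction with
  | zero =>
    intro _
    calc b k ≤ Nat.fib 2 := by simpa using hbk
      _ ≤ a k := by rw [hfib k (by omega)]; exact_mod_cast Nat.fib_mono (by omega)
  | one =>
    intro _
    calc b (k + 1) ≤ Nat.fib 3 := by simpa [Nat.fib_add_two] using hbk1
      _ ≤ a (k + 1) := by rw [hfib _ (by omega)]; exact_mod_cast Nat.fib_mono (by omega)
  | more j ih₀ ih₁ =>
    intro hn
    have hb₁ : b (k + j + 1) ≤ a (k + j + 1) := ih₁ (by omega) (by omega)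
    have hrec : b (k + (j + 2)) = b (k + j + 1) + b (θ (k + (j + 2))) := hbrec _ (by omega) hn
    have harec' : a (k + (j + 2)) = a (k + j + 1) + a (k + j) := harec _ (by omega)
    rw [hrec, harec']
    by_cases hθ : θ (k + (j + 2)) = k + j
    · rw [hθ]
      exact add_le_add hb₁ (ih₀ (by omega) (by omega))
    · have ha_nonneg : 0 ≤ a (k + j) := by rw [hfib _ (by omega)]; positivity
      rw [hzero _ (by omega) hn (by omega)]
      linarith

/-- Let (b_i) satisfy b_0 = 1, b_1 = 0, b_i = b_{i-1} + b_{θ(i)} for 2 ≤ i ≤ n with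
θ(i) < i; suppose b_{θ(i)} = 0 whenever θ(i) ≠ i-2 and i ≥ k+2, that b_i = 0 for
1 ≤ i < k (for some fixed k ≥ 3), and b_k ≤ 1, b_{k+1} ≤ 2. Let (a_i) be the
Fibonacci-type sequence a_0 = 1, a_1 = 0, a_i = a_{i-1} + a_{i-2}. Then b_i ≤ a_i
for all k ≤ i ≤ n. -/
theorem stmt_16 (n k : ℕ) (hk : 3 ≤ k) (θ : ℕ → ℕ)
    (hθ : ∀ i, 2 ≤ i → i ≤ n → θ i < i)
    (b : ℕ → ℝ) (hb0 : b 0 = 1) (hb1 : b 1 = 0)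
    (hbrec : ∀ i, 2 ≤ i → i ≤ n → b i = b (i - 1) + b (θ i))
    (hzero : ∀ i, k + 2 ≤ i → i ≤ n → θ i ≠ i - 2 → b (θ i) = 0)
    (hsmall : ∀ i, 1 ≤ i → i < k → b i = 0)
    (hbk : b k ≤ 1) (hbk1 : b (k + 1) ≤ 2)
    (a : ℕ → ℝ) (ha0 : a 0 = 1) (ha1 : a 1 = 0)
    (harec : ∀ i, 2 ≤ i → a i = a (i - 1) + a (i - 2)) :
    ∀ i, k ≤ i → i ≤ n → b i ≤ a i :=
  stmt_16_general n k hk θ b hbrec hzero hbk hbk1 a ha0 ha1 harec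
end

section
/- Let u be a finite nonempty non-periodic word over alphabet {a,b}, W = u^∞, and suppose v_0, v_1, ..., v_n are all forks of W (including the empty word Λ and treating W itself as fork v_0), ordered so that z(v_0) ≤ z(v_1) ≤ ... ≤ z(v_n), where z(Λ) = |u| and z(W) := 1. Then z(v_1) = 2. -/
open Classical

/-- `v` occurs in the periodic bi-infinite word `u^∞` starting at position `i`
(positions taken modulo the period `|u|`). -/
def OccAt {α : Type*} (u : List α) (i : ℕ) (v : List α) : Prop :=
  ∀ j, j < v.length → v[j]? = u[(i + j) % u.length]?

/-- `v` is a subword (contiguous factor) of `u^∞`. -/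
def Occurs {α : Type*} (u : List α) (v : List α) : Prop :=
  ∃ i < u.length, OccAt u i v

/-- The significance `z(v)`: the number of occurrences of `v` per period of `u^∞`. -/
noncomputable def z {α : Type*} (u : List α) (v : List α) : ℕ :=
  ((Finset.range u.length).filter fun i => OccAt u i v).card

/-- The alphabet letters a and b, modeled as the booleans. -/
notation "la" => true
notation "lb" => false

/-- A finite fork of W = u^∞ over {a,b}: a word v such that va, vb, av, bv all
occur in W. -/
def IsFork (u : List Bool) (v : List Bool) : Prop :=
  Occurs u (v ++ [la]) ∧ Occurs u (v ++ [lb]) ∧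
    Occurs u (la :: v) ∧ Occurs u (lb :: v)

/-!
Every fork is right special, so it occurs at least twice per period. Since `u` is primitive, a
word occurring twice per period is shorter than `u`: two occurrences of a longer word make `u^∞`
invariant under a shift by less than `|u|`, and Fine–Wilf then writes `u` as a proper power. So
there is a longest right special word `r`. By maximality `ra` and `rb` each occur once per period,
whence `z(r) = 2`, and their occurrences are preceded by different letters (a common letter `c`
would make `cr` right special), so `r` is a fork.
-/

open List Function

section PeriodicWord

variable {α : Type*}

def letterAt (u : List α) (k : ℕ) : Option α := u[k % u.length]?

def IsProperPower (u : List α) : Prop :=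
  ∃ (w : List α) (m : ℕ), 2 ≤ m ∧ u = (replicate m w).flatten

theorem periodic_letterAt (u : List α) : Periodic (letterAt u) u.length := by
  intro k
  simp [letterAt]

theorem letterAt_eq_getElem?_append_self {u : List α} {i : ℕ} (hi : i < 2 * u.length) :
    (u ++ u)[i]? = letterAt u i := by
  unfold letterAt
  rcases lt_or_ge i u.length with h | h
  · rw [getElem?_append_left h, Nat.mod_eq_of_lt h]
  · rw [getElem?_append_right h, Nat.mod_eq_sub_mod h, Nat.mod_eq_of_lt (by omega)]

theorem hasPeriod_append_self_of_periodic {u : List α} {d : ℕ} (h : Periodic (letterAt u) d) :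
    HasPeriod (u ++ u) d := by
  rw [hasPeriod_iff_getElem?]
  intro i hi
  simp only [length_append] at hi
  rw [letterAt_eq_getElem?_append_self (by omega), letterAt_eq_getElem?_append_self (by omega),
    h i]

theorem List.HasPeriod.eq_flatten_replicate {p : ℕ} :
    ∀ (k : ℕ) {w : List α}, HasPeriod w p → w.length = (k + 1) * p →
      w = (replicate (k + 1) (w.take p)).flatten
  | 0, w, _, hlen => by simp [take_of_length_le (by omega : w.length ≤ p)]
  | k + 1, w, hw, hlen => by
    have hdrop : HasPeriod (w.drop p) p :=
      HasPeriod.factor (u := w.take p) (w := []) (by simpa using hw)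
    have hdrop_len : (w.drop p).length = (k + 1) * p := by
      simp only [length_drop, hlen]; rw [Nat.succ_mul, Nat.add_sub_cancel]
    have htake : (w.drop p).take p = w.take p := by
      rw [prefix_iff_eq_take.mp (hw.drop_prefix p), take_take, hdrop_len,
        min_eq_left (Nat.le_mul_of_pos_left p k.succ_pos)]
    rw [replicate_succ, flatten_cons, ← htake, ← eq_flatten_replicate k hdrop hdrop_len, htake,
      take_append_drop]

theorem isProperPower_of_hasPeriod {u : List α} {p : ℕ} (hu : HasPeriod u p)
    (hpu : p < u.length) (hdvd : p ∣ u.length) : IsProperPower u := by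
  obtain ⟨q, hq⟩ := hdvd
  have hq2 : 1 < q := Nat.lt_of_mul_lt_mul_left (a := p) (by omega)
  obtain ⟨k, rfl⟩ : ∃ k, q = k + 1 + 1 := ⟨q - 2, by omega⟩
  exact ⟨u.take p, k + 1 + 1, by omega, hu.eq_flatten_replicate (k + 1) (by rw [hq]; ring)⟩

/-- By Fine–Wilf on `u ++ u`, `gcd d |u|` is a period of `u`. -/
theorem isProperPower_of_periodic {u : List α} {d : ℕ} (hd : 0 < d) (hdu : d < u.length)
    (h : Periodic (letterAt u) d) : IsProperPower u := by
  have hgcd := (hasPeriod_append_self_of_periodic h).gcd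
    (hasPeriod_append_self_of_periodic (periodic_letterAt u)) (by rw [length_append]; omega)
  exact isProperPower_of_hasPeriod (HasPeriod.factor (u := []) (by simpa using hgcd))
    ((Nat.gcd_le_left _ hd).trans_lt hdu) (Nat.gcd_dvd_right _ _)

theorem periodic_sub_of_occAt {u v : List α} {a b : ℕ} (hab : a < b) (hb : b < u.length)
    (hv : u.length ≤ v.length) (ha : OccAt u a v) (hb' : OccAt u b v) :
    Periodic (letterAt u) (b - a) := by
  have hshift : ∀ j, letterAt u (a + j) = letterAt u (b + j) := by
    intro j
    have hj : j % u.length < v.length := (Nat.mod_lt _ (by omega)).trans_le hv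
    unfold letterAt
    rw [← Nat.add_mod_mod, ← (ha _ hj), hb' _ hj, Nat.add_mod_mod]
  intro k
  calc letterAt u (k + (b - a)) = letterAt u (k + (b - a) + u.length) :=
        (periodic_letterAt u _).symm
    _ = letterAt u (b + (k + u.length - a)) := by congr 1; omega
    _ = letterAt u (a + (k + u.length - a)) := (hshift _).symm
    _ = letterAt u (k + u.length) := by congr 1; omega
    _ = letterAt u k := periodic_letterAt u _

theorem isProperPower_of_occAt {u v : List α} {a b : ℕ} (hne : a ≠ b) (ha : a < u.length)
    (hb : b < u.length) (hv : u.length ≤ v.length) (hoa : OccAt u a v) (hob : OccAt u b v) :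
    IsProperPower u := by
  wlog hab : a < b generalizing a b
  · exact this hne.symm hb ha hob hoa (by omega)
  exact isProperPower_of_periodic (by omega) (by omega) (periodic_sub_of_occAt hab hb hv hoa hob)

theorem length_lt_of_two_le_z {u v : List α} (hu : ¬IsProperPower u) (hz : 2 ≤ z u v) :
    v.length < u.length := by
  by_contra! hv
  obtain ⟨a, ha, b, hb, hne⟩ := Finset.one_lt_card.mp hz
  simp only [Finset.mem_filter, Finset.mem_range] at ha hb
  exact hu (isProperPower_of_occAt hne ha.1 hb.1 hv ha.2 hb.2)

end PeriodicWord

section Occurrences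

variable {α : Type*} {u v : List α} {i : ℕ}

theorem occAt_append_singleton_iff {c : α} :
    OccAt u i (v ++ [c]) ↔ OccAt u i v ∧ letterAt u (i + v.length) = some c := by
  simp only [OccAt, length_append, length_singleton, Nat.lt_succ_iff_lt_or_eq]
  constructor
  · intro h
    refine ⟨fun j hj => ?_, ?_⟩
    · simpa [getElem?_append_left hj] using h j (Or.inl hj)
    · simpa [letterAt] using (h _ (Or.inr rfl)).symm
  · rintro ⟨h, hc⟩ j (hj | rfl)
    · rw [getElem?_append_left hj, h j hj]
    · simpa [letterAt] using hc.symm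

theorem occAt_cons_iff {c : α} :
    OccAt u i (c :: v) ↔ letterAt u i = some c ∧ OccAt u (i + 1) v := by
  simp only [OccAt, length_cons]
  constructor
  · intro h
    refine ⟨by simpa [letterAt] using (h 0 (by omega)).symm, fun j hj => ?_⟩
    simpa [Nat.add_right_comm, Nat.add_assoc] using h (j + 1) (by omega)
  · rintro ⟨hc, h⟩ (_ | j) hj
    · simpa [letterAt] using hc.symm
    · simpa [Nat.add_right_comm, Nat.add_assoc] using h j (by omega)

theorem occAt_mod_length_iff : OccAt u (i % u.length) v ↔ OccAt u i v := by
  simp only [OccAt, Nat.mod_add_mod]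

theorem occAt_add_length_iff : OccAt u (i + u.length) v ↔ OccAt u i v := by
  rw [← occAt_mod_length_iff, Nat.add_mod_right, occAt_mod_length_iff]

theorem Occurs.of_append {w : List α} (h : Occurs u (v ++ w)) : Occurs u v := by
  obtain ⟨i, hi, h⟩ := h
  refine ⟨i, hi, fun j hj => ?_⟩
  simpa [getElem?_append_left hj] using h j (by rw [length_append]; omega)

theorem Occurs.exists_cons (h : Occurs u v) : ∃ c, Occurs u (c :: v) := by
  obtain ⟨i, hi, h⟩ := h
  have hu : 0 < u.length := by omega
  set j := i + u.length - 1
  refine ⟨u[j % u.length]'(Nat.mod_lt _ hu), j % u.length, Nat.mod_lt _ hu, ?_⟩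
  rw [occAt_mod_length_iff, occAt_cons_iff, show j + 1 = i + u.length by omega,
    occAt_add_length_iff]
  exact ⟨getElem?_eq_getElem _, h⟩

theorem z_pos_iff : 0 < z u v ↔ Occurs u v := by
  simp [z, Finset.card_pos, Finset.filter_nonempty_iff, Occurs]

end Occurrences

section RightSpecial

variable {u v : List Bool}

theorem z_eq_z_append_true_add_z_append_false :
    z u v = z u (v ++ [true]) + z u (v ++ [false]) := by
  unfold z
  rw [← Finset.card_union_of_disjoint, ← Finset.filter_or]
  · congr 1
    refine Finset.filter_congr fun i hi => ?_
    obtain ⟨c, hc⟩ : ∃ c, letterAt u (i + v.length) = some c :=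
      ⟨_, getElem?_eq_getElem (Nat.mod_lt _ (by rw [Finset.mem_range] at hi; omega))⟩
    cases c <;> simp [occAt_append_singleton_iff, hc]
  · refine Finset.disjoint_filter.mpr fun i _ ht hf => ?_
    rw [occAt_append_singleton_iff] at ht hf
    simpa [ht.2] using hf.2

def IsRightSpecial (u v : List Bool) : Prop :=
  Occurs u (v ++ [true]) ∧ Occurs u (v ++ [false])

theorem IsFork.isRightSpecial (h : IsFork u v) : IsRightSpecial u v := ⟨h.1, h.2.1⟩

theorem IsRightSpecial.two_le_z (h : IsRightSpecial u v) : 2 ≤ z u v := by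
  have ht := z_pos_iff.mpr h.1
  have hf := z_pos_iff.mpr h.2
  rw [z_eq_z_append_true_add_z_append_false]
  omega

theorem exists_isRightSpecial_of_two_le_z {v : List Bool} (hu : ¬IsProperPower u)
    (hz : 2 ≤ z u v) :
    ∃ r, IsRightSpecial u r ∧ v.length ≤ r.length := by
  have hlen := length_lt_of_two_le_z hu hz
  have hsplit := z_eq_z_append_true_add_z_append_false (u := u) (v := v)
  by_cases ht : Occurs u (v ++ [true])
  · by_cases hf : Occurs u (v ++ [false])
    · exact ⟨v, ⟨ht, hf⟩, le_rfl⟩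
    · obtain ⟨r, hr, hle⟩ := exists_isRightSpecial_of_two_le_z hu
        (by rw [← z_pos_iff] at hf; omega : 2 ≤ z u (v ++ [true]))
      exact ⟨r, hr, by simp only [length_append, length_singleton] at hle; omega⟩
  · obtain ⟨r, hr, hle⟩ := exists_isRightSpecial_of_two_le_z hu
      (by rw [← z_pos_iff] at ht; omega : 2 ≤ z u (v ++ [false]))
    exact ⟨r, hr, by simp only [length_append, length_singleton] at hle; omega⟩
termination_by u.length - v.length
decreasing_by all_goals simp only [length_append, length_singleton]; omega

theorem exists_isRightSpecial_forall_length_le (hu : ¬IsProperPower u)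
    (hv : IsRightSpecial u v) :
    ∃ r, IsRightSpecial u r ∧ ∀ r', IsRightSpecial u r' → r'.length ≤ r.length := by
  let P k := ∃ r, IsRightSpecial u r ∧ r.length = k
  have hbound : ∀ r, IsRightSpecial u r → r.length ≤ u.length := fun r hr =>
    (length_lt_of_two_le_z hu hr.two_le_z).le
  obtain ⟨r, hr, hlen⟩ : P (Nat.findGreatest P u.length) :=
    Nat.findGreatest_spec (hbound v hv) ⟨v, hv, rfl⟩
  exact ⟨r, hr, fun r' hr' => hlen ▸ Nat.le_findGreatest (hbound r' hr') ⟨r', hr', rfl⟩⟩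

theorem z_eq_two_of_forall_length_le (hu : ¬IsProperPower u) (hr : IsRightSpecial u v)
    (hmax : ∀ r, IsRightSpecial u r → r.length ≤ v.length) : z u v = 2 := by
  have hone : ∀ c, Occurs u (v ++ [c]) → z u (v ++ [c]) = 1 := by
    intro c hc
    by_contra hne
    obtain ⟨r, hr', hle⟩ := exists_isRightSpecial_of_two_le_z hu
      (by have := z_pos_iff.mpr hc; omega : 2 ≤ z u (v ++ [c]))
    have := hmax r hr'
    simp only [length_append, length_singleton] at hle
    omega
  rw [z_eq_z_append_true_add_z_append_false, hone _ hr.1, hone _ hr.2]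

theorem isFork_of_forall_length_le (hr : IsRightSpecial u v)
    (hmax : ∀ r, IsRightSpecial u r → r.length ≤ v.length) : IsFork u v := by
  obtain ⟨c, hc⟩ := hr.1.exists_cons
  obtain ⟨c', hc'⟩ := hr.2.exists_cons
  rw [← cons_append] at hc hc'
  by_cases hcc : c = c'
  · subst hcc
    have := hmax (c :: v) ⟨hc, hc'⟩
    simp at this
  · refine ⟨hr.1, hr.2, ?_, ?_⟩ <;> cases c <;> cases c' <;> first
      | exact absurd rfl hcc | exact hc.of_append | exact hc'.of_append

end RightSpecial

theorem stmt_19_general (u : List Bool)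
    (hnp : ¬ ∃ (w : List Bool) (m : ℕ), 2 ≤ m ∧ u = (List.replicate m w).flatten)
    (n : ℕ) (hn : 0 < n) (vs : Fin n → List Bool)
    (hall : ∀ v : List Bool, IsFork u v ↔ ∃ i, vs i = v)
    (hmono : ∀ i j : Fin n, i ≤ j → z u (vs i) ≤ z u (vs j)) :
    z u (vs ⟨0, hn⟩) = 2 := by
  have hv₀ : IsRightSpecial u (vs ⟨0, hn⟩) := ((hall _).mpr ⟨_, rfl⟩).isRightSpecial
  obtain ⟨r, hr, hmax⟩ := exists_isRightSpecial_forall_length_le hnp hv₀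
  obtain ⟨i, hi⟩ := (hall r).mp (isFork_of_forall_length_le hr hmax)
  have hle := hmono ⟨0, hn⟩ i (Nat.zero_le _)
  rw [hi, z_eq_two_of_forall_length_le hnp hr hmax] at hle
  exact le_antisymm hle hv₀.two_le_z

/-- Let u be nonempty and non-periodic, W = u^∞, and let vs 0, ..., vs (n-1) enumerate
all the finite forks of W in nondecreasing order of significance (these are the forks
v_1, ..., v_n of the paper; the fork v_0 = W itself has significance 1). Then the
least significance of a finite fork is 2, i.e. z(v_1) = 2. -/
theorem stmt_19 (u : List Bool) (hu : u ≠ [])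
    (hnp : ¬ ∃ (w : List Bool) (m : ℕ), 2 ≤ m ∧ u = (List.replicate m w).flatten)
    (n : ℕ) (hn : 0 < n) (vs : Fin n → List Bool)
    (hinj : Function.Injective vs)
    (hall : ∀ v : List Bool, IsFork u v ↔ ∃ i, vs i = v)
    (hmono : ∀ i j : Fin n, i ≤ j → z u (vs i) ≤ z u (vs j)) :
    z u (vs ⟨0, hn⟩) = 2 :=
  stmt_19_general u hnp n hn vs hall hmono
end
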